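/- Let τ : ℂ^∞ → ℂ (a formal function of finitely many of the variables t_0, t_1, …) and define τ̃(t;q) := τ(t^G(t;q)) · exp(g(t;q)/ε²), where t^G_n(t;q) = Σ_{k≥0} (q^k/k!) t_{n+k} and g(t;q) = (1/2) Σ_{i,j≥0} (q^{i+j+1}/(i+j+1)) (t_i/i!)(t_j/j!). Then τ̃ satisfies ∂τ̃/∂q = Σ_{k≥0} t_{k+1} ∂τ̃/∂t_k + (t_0²/(2ε²)) τ̃. -/

import Mathlib

/-- The Galilean shift `t^G_n(t;q) := ∑_{k} (q^k/k!) t_{n+k}`, truncated at `M`. -/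
noncomputable def tG (M : ℕ) (t : ℕ → ℂ) (q : ℂ) (n : ℕ) : ℂ :=
  ∑ k ∈ Finset.range M, q ^ k / (Nat.factorial k : ℂ) * t (n + k)

/-- `g(t;q) := (1/2) ∑_{i,j} (q^{i+j+1}/(i+j+1)) (t_i/i!)(t_j/j!)`, truncated at `M`. -/
noncomputable def gfun (M : ℕ) (t : ℕ → ℂ) (q : ℂ) : ℂ :=
  (1 / 2) * ∑ i ∈ Finset.range M, ∑ j ∈ Finset.range M,
    q ^ (i + j + 1) / ((i : ℂ) + j + 1) *
      (t i / (Nat.factorial i : ℂ)) * (t j / (Nat.factorial j : ℂ))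

/-- `τ̃(t;q) := τ(t^G(t;q)) exp(g(t;q)/ε²)`, for `τ = F` a differentiable function
of the variables `t_0,…,t_{M−1}`. -/
noncomputable def tauTilde (M : ℕ) (ε : ℂ) (F : (Fin M → ℂ) → ℂ)
    (t : ℕ → ℂ) (q : ℂ) : ℂ :=
  F (fun i => tG M t q (i : ℕ)) * Complex.exp (gfun M t q / ε ^ 2)

/-!
Write `g = ½ B_q(t, t)` for the symmetric bilinear form `B_q` of `galileanForm`. Since `t^G` is
linear in `t`, the vector field `∑ₖ t_{k+1} ∂/∂t_k` acts on `t^G` and on `g` by substituting the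
shifted sequence `t_{·+1}` for one argument: it sends `t^G_n` to `t^G_{n+1} = ∂t^G_n/∂q`, and `g`
to `B_q(t, t_{·+1})`. By the chain rule the claim then reduces to
`∂g/∂q = (t^G_0)²/2 = B_q(t, t_{·+1}) + t_0²/2`.
-/

open Finset

noncomputable def galileanForm (M : ℕ) (q : ℂ) (u v : ℕ → ℂ) : ℂ :=
  ∑ i ∈ range M, ∑ j ∈ range M,
    q ^ (i + j + 1) / ((i : ℂ) + j + 1) * (u i / (i.factorial : ℂ)) * (v j / (j.factorial : ℂ))

lemma gfun_eq_galileanForm (M : ℕ) (t : ℕ → ℂ) (q : ℂ) :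
    gfun M t q = 1 / 2 * galileanForm M q t t := rfl

lemma galileanForm_comm (M : ℕ) (q : ℂ) (u v : ℕ → ℂ) :
    galileanForm M q u v = galileanForm M q v u := by
  rw [galileanForm, sum_comm]
  refine sum_congr rfl fun i _ => sum_congr rfl fun j _ => ?_
  rw [add_comm j i, add_comm (j : ℂ) i]
  ring

lemma tG_shift (M : ℕ) (t : ℕ → ℂ) (q : ℂ) (n : ℕ) :
    tG M (fun j => t (j + 1)) q n = tG M t q (n + 1) := by
  simp only [tG, add_right_comm n]

lemma hasDerivAt_update_apply {ι : Type*} [DecidableEq ι] (t : ι → ℂ) (k j : ι) (x : ℂ) :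
    HasDerivAt (fun s => Function.update t k s j) ((Pi.single k 1 : ι → ℂ) j) x := by
  by_cases h : j = k
  · subst h
    simpa using hasDerivAt_id' x
  · simpa [h] using hasDerivAt_const x (t j)

section CoordinateDerivatives

variable {M : ℕ} {q x : ℂ} {u v : ℂ → ℕ → ℂ} {u' v' : ℕ → ℂ}

lemma hasDerivAt_tG_comp (n : ℕ) (hu : ∀ j, HasDerivAt (fun s => u s j) (u' j) x) :
    HasDerivAt (fun s => tG M (u s) q n) (tG M u' q n) x :=
  HasDerivAt.fun_sum fun k _ => (hu (n + k)).const_mul _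

lemma hasDerivAt_galileanForm_comp (hu : ∀ j, HasDerivAt (fun s => u s j) (u' j) x)
    (hv : ∀ j, HasDerivAt (fun s => v s j) (v' j) x) :
    HasDerivAt (fun s => galileanForm M q (u s) (v s))
      (galileanForm M q u' (v x) + galileanForm M q (u x) v') x := by
  simp only [galileanForm, ← sum_add_distrib]
  refine HasDerivAt.fun_sum fun i _ => HasDerivAt.fun_sum fun j _ => ?_
  refine ((((hu i).div_const _).const_mul _).mul ((hv j).div_const _)).congr_deriv ?_
  ring

end CoordinateDerivatives

lemma hasDerivAt_pow_div_factorial (k : ℕ) (q : ℂ) :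
    HasDerivAt (fun s => s ^ (k + 1) / ((k + 1).factorial : ℂ)) (q ^ k / (k.factorial : ℂ)) q := by
  refine ((hasDerivAt_pow (k + 1) q).div_const ((k + 1).factorial : ℂ)).congr_deriv ?_
  rw [Nat.factorial_succ, Nat.cast_mul, add_tsub_cancel_right]
  field_simp

lemma hasDerivAt_tG_q {M : ℕ} {t : ℕ → ℂ} (ht : ∀ n, M ≤ n → t n = 0) (q : ℂ) (n : ℕ) :
    HasDerivAt (fun s => tG M t s n) (tG M t q (n + 1)) q := by
  rcases M with _ | M
  · simpa [tG] using hasDerivAt_const q (0 : ℂ)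
  have hsplit : (fun s => tG (M + 1) t s n) =
      fun s => ∑ k ∈ range M, s ^ (k + 1) / ((k + 1).factorial : ℂ) * t (n + (k + 1)) + t n := by
    funext s
    simp [tG, sum_range_succ']
  rw [hsplit]
  refine ((HasDerivAt.fun_sum fun k _ => (hasDerivAt_pow_div_factorial k q).mul_const
    (t (n + (k + 1)))).add_const (t n)).congr_deriv ?_
  rw [tG, sum_range_succ, ht (n + 1 + M) (by omega), mul_zero, add_zero]
  simp only [add_assoc, add_comm 1]

lemma hasDerivAt_galileanForm_q (M : ℕ) (u v : ℕ → ℂ) (q : ℂ) :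
    HasDerivAt (fun s => galileanForm M s u v) (tG M u q 0 * tG M v q 0) q := by
  simp only [tG, zero_add, sum_mul_sum]
  refine HasDerivAt.fun_sum fun i _ => HasDerivAt.fun_sum fun j _ => ?_
  have hij : ((i : ℂ) + j + 1) ≠ 0 := by exact_mod_cast Nat.succ_ne_zero (i + j)
  refine ((((hasDerivAt_pow (i + j + 1) q).div_const ((i : ℂ) + j + 1)).mul_const
    (u i / (i.factorial : ℂ))).mul_const (v j / (j.factorial : ℂ))).congr_deriv ?_
  push_cast
  field_simp
  ring

lemma tG_q_zero {M : ℕ} {t : ℕ → ℂ} (ht : ∀ n, M ≤ n → t n = 0) (n : ℕ) :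
    tG M t 0 n = t n := by
  rw [tG, sum_eq_single 0 (fun k _ hk => by simp [hk]) fun h0 => by
    simp [ht n (by simp at h0; omega)]]
  simp

lemma galileanForm_q_zero (M : ℕ) (u v : ℕ → ℂ) : galileanForm M 0 u v = 0 := by
  simp [galileanForm]

section ShiftedSequence

variable {M : ℕ} {t : ℕ → ℂ}

lemma sum_mul_single_eq_shift (ht : ∀ n, M ≤ n → t n = 0) (j : ℕ) :
    ∑ k ∈ range M, t (k + 1) * (Pi.single k 1 : ℕ → ℂ) j = t (j + 1) := by
  simp only [Pi.single_apply, mul_ite, mul_one, mul_zero, sum_ite_eq, mem_range]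
  split_ifs with hj
  · rfl
  · exact (ht _ (by omega)).symm

lemma sum_mul_tG_single (ht : ∀ n, M ≤ n → t n = 0) (q : ℂ) (n : ℕ) :
    ∑ k ∈ range M, t (k + 1) * tG M (Pi.single k 1) q n = tG M t q (n + 1) := by
  rw [← tG_shift]
  simp only [tG, mul_sum]
  rw [sum_comm]
  refine sum_congr rfl fun m _ => ?_
  simp only [mul_left_comm (t _)]
  rw [← mul_sum, sum_mul_single_eq_shift ht]

lemma sum_mul_galileanForm_single (ht : ∀ n, M ≤ n → t n = 0) (q : ℂ) :
    ∑ k ∈ range M, t (k + 1) * galileanForm M q t (Pi.single k 1) =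
      galileanForm M q t (fun j => t (j + 1)) := by
  simp only [galileanForm, mul_sum]
  rw [sum_comm]
  refine sum_congr rfl fun i _ => ?_
  rw [sum_comm]
  refine sum_congr rfl fun j _ => ?_
  rw [← sum_mul_single_eq_shift ht j, sum_div, mul_sum]
  refine sum_congr rfl fun k _ => ?_
  ring

/-- Both sides agree at `q = 0` and have `q`-derivative `2 t^G_0 t^G_1`. -/
lemma two_mul_galileanForm_shift_add_sq (ht : ∀ n, M ≤ n → t n = 0) (q : ℂ) :
    2 * galileanForm M q t (fun j => t (j + 1)) + t 0 ^ 2 = tG M t q 0 ^ 2 := by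
  set φ : ℂ → ℂ := fun s => 2 * galileanForm M s t (fun j => t (j + 1)) + t 0 ^ 2 - tG M t s 0 ^ 2
  have hφ : ∀ s, HasDerivAt φ 0 s := fun s =>
    ((((hasDerivAt_galileanForm_q M t _ s).const_mul 2).add_const (t 0 ^ 2)).sub
      ((hasDerivAt_tG_q ht s 0).pow 2)).congr_deriv (by rw [tG_shift]; ring)
  have hφ0 : φ 0 = 0 := by simp [φ, galileanForm_q_zero, tG_q_zero ht]
  have := is_const_of_deriv_eq_zero (fun s => (hφ s).differentiableAt) (fun s => (hφ s).deriv) q 0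
  linear_combination this + hφ0

end ShiftedSequence

lemma hasDerivAt_gfun_q (M : ℕ) (t : ℕ → ℂ) (q : ℂ) :
    HasDerivAt (fun s => gfun M t s) (tG M t q 0 ^ 2 / 2) q := by
  simp only [gfun_eq_galileanForm]
  exact ((hasDerivAt_galileanForm_q M t t q).const_mul (1 / 2)).congr_deriv (by ring)

lemma hasDerivAt_gfun_update (M : ℕ) (t : ℕ → ℂ) (q : ℂ) (k : ℕ) :
    HasDerivAt (fun s => gfun M (Function.update t k s) q) (galileanForm M q t (Pi.single k 1))
      (t k) := by
  simp only [gfun_eq_galileanForm]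
  have h := hasDerivAt_galileanForm_comp (M := M) (q := q) (hasDerivAt_update_apply t k · (t k))
    (hasDerivAt_update_apply t k · (t k))
  rw [Function.update_eq_self, galileanForm_comm M q (Pi.single k 1)] at h
  exact (h.const_mul (1 / 2)).congr_deriv (by ring)

lemma hasDerivAt_comp_mul_cexp {E : Type*} [NormedAddCommGroup E] [NormedSpace ℂ E]
    {F : E → ℂ} {x : ℂ → E} {h : ℂ → ℂ} {x' : E} {h' c s : ℂ}
    (hF : DifferentiableAt ℂ F (x s)) (hx : HasDerivAt x x' s) (hh : HasDerivAt h h' s) :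
    HasDerivAt (fun r => F (x r) * Complex.exp (h r / c))
      (fderiv ℂ F (x s) x' * Complex.exp (h s / c) + F (x s) * Complex.exp (h s / c) * (h' / c))
      s :=
  ((hF.hasFDerivAt.comp_hasDerivAt s hx).mul (hh.div_const c).cexp).congr_deriv
    (by rw [Function.comp_apply]; ring)

section TauTilde

variable {M : ℕ} {ε : ℂ} {F : (Fin M → ℂ) → ℂ} {t : ℕ → ℂ} {q : ℂ}

lemma hasDerivAt_tauTilde_q (ht : ∀ n, M ≤ n → t n = 0)
    (hF : DifferentiableAt ℂ F (fun i : Fin M => tG M t q i)) :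
    HasDerivAt (fun s => tauTilde M ε F t s)
      (fderiv ℂ F (fun i : Fin M => tG M t q i) (fun i : Fin M => tG M t q ((i : ℕ) + 1)) *
          Complex.exp (gfun M t q / ε ^ 2) + tauTilde M ε F t q * (tG M t q 0 ^ 2 / 2 / ε ^ 2)) q :=
  hasDerivAt_comp_mul_cexp hF (hasDerivAt_pi.2 fun i => hasDerivAt_tG_q ht q i)
    (hasDerivAt_gfun_q M t q)

lemma hasDerivAt_tauTilde_update (hF : DifferentiableAt ℂ F (fun i : Fin M => tG M t q i))
    (k : ℕ) :
    HasDerivAt (fun s => tauTilde M ε F (Function.update t k s) q)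
      (fderiv ℂ F (fun i : Fin M => tG M t q i) (fun i => tG M (Pi.single k 1) q i) *
          Complex.exp (gfun M t q / ε ^ 2) +
        tauTilde M ε F t q * (galileanForm M q t (Pi.single k 1) / ε ^ 2)) (t k) := by
  have hx : HasDerivAt (fun s (i : Fin M) => tG M (Function.update t k s) q i)
      (fun i => tG M (Pi.single k 1) q i) (t k) :=
    hasDerivAt_pi.2 fun i => hasDerivAt_tG_comp i (hasDerivAt_update_apply t k · (t k))
  have h := hasDerivAt_comp_mul_cexp (c := ε ^ 2) (F := F) (by rwa [Function.update_eq_self]) hx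
    (hasDerivAt_gfun_update M t q k)
  rwa [Function.update_eq_self] at h

end TauTilde

theorem tauTilde_galilean_flow_general (M : ℕ) (ε : ℂ)
    (F : (Fin M → ℂ) → ℂ) (hF : Differentiable ℂ F)
    (t : ℕ → ℂ) (ht : ∀ n, M ≤ n → t n = 0) (q : ℂ) :
    HasDerivAt (fun s => tauTilde M ε F t s)
      (∑ k ∈ Finset.range M, t (k + 1) *
          deriv (fun s => tauTilde M ε F (Function.update t k s) q) (t k)
        + t 0 ^ 2 / (2 * ε ^ 2) * tauTilde M ε F t q) q := by
  have hX := hF (fun i : Fin M => tG M t q i)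
  have hshift : ∑ k ∈ range M, t (k + 1) • (fun i : Fin M => tG M (Pi.single k 1) q i) =
      fun i : Fin M => tG M t q ((i : ℕ) + 1) := by
    funext i
    simp only [Finset.sum_apply, Pi.smul_apply, smul_eq_mul, sum_mul_tG_single ht]
  refine (hasDerivAt_tauTilde_q ht hX).congr_deriv ?_
  simp only [fun k => (hasDerivAt_tauTilde_update (ε := ε) hX k).deriv, mul_add, sum_add_distrib]
  have hform : ∑ k ∈ range M,
      t (k + 1) * (tauTilde M ε F t q * (galileanForm M q t (Pi.single k 1) / ε ^ 2)) =
        tauTilde M ε F t q / ε ^ 2 * galileanForm M q t (fun j => t (j + 1)) := by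
    rw [← sum_mul_galileanForm_single ht, mul_sum]
    exact sum_congr rfl fun k _ => by ring
  rw [← hshift, map_sum, hform]
  simp only [map_smul, smul_eq_mul, sum_mul, mul_assoc]
  linear_combination (-(tauTilde M ε F t q / (2 * ε ^ 2))) * two_mul_galileanForm_shift_add_sq ht q

/-- `τ̃` satisfies `∂τ̃/∂q = ∑_k t_{k+1} ∂τ̃/∂t_k + (t_0²/(2ε²)) τ̃`. -/
theorem tauTilde_galilean_flow (M : ℕ) (ε : ℂ) (hε : ε ≠ 0)
    (F : (Fin M → ℂ) → ℂ) (hF : Differentiable ℂ F)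
    (t : ℕ → ℂ) (ht : ∀ n, M ≤ n → t n = 0) (q : ℂ) :
    HasDerivAt (fun s => tauTilde M ε F t s)
      (∑ k ∈ Finset.range M, t (k + 1) *
          deriv (fun s => tauTilde M ε F (Function.update t k s) q) (t k)
        + t 0 ^ 2 / (2 * ε ^ 2) * tauTilde M ε F t q) q :=
  tauTilde_galilean_flow_general M ε F hF t ht q
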